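/- In the qudit lattice setting, let H = ∑_{Z ⊆ Λ, |Z| ≤ k} h_Z (k ≥ 1) with each h_Z Hermitian and supported on Z and with ∑_{Z ∋ i'} ‖h_Z‖ ≤ g₀ + g₁ for every site i', and suppose H has a simple smallest eigenvalue, unit ground state Ω and spectral gap Δ > 0. Fix a site i ∈ Λ and assume the all-to-all condition at site i. Let u₀ be a d × d unitary with u₀ ρ_i u₀† = ρ_i, where ρ_i is the reduced density matrix of Ω on site i, and let u be the operator on ℋ supported on {i} acting as u₀ at site i and as the identity elsewhere. Then |⟨Ω, (u† H u − H) Ω⟩| ≤ δ_Rob, where δ_Rob := 2γ g₁ √((g₀ + g₁)/(n Δ)) and γ := √(18 k (k + 1)). -/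

import Mathlib

open Matrix

namespace FullyConnected

/-- Configurations of `d`-state qudits on the site set `Λ`. -/
abbrev Config (Λ : Type*) (d : ℕ) := Λ → Fin d

/-- Operators on the total Hilbert space of the qudit lattice `Λ`, written as matrices in the
canonical product basis indexed by configurations. -/
abbrev Op (Λ : Type*) (d : ℕ) := Matrix (Config Λ d) (Config Λ d) ℂ

/-- The ℓ²→ℓ² operator norm of a square complex matrix. -/
noncomputable def opNorm {m : Type*} [Fintype m] [DecidableEq m] (M : Matrix m m ℂ) : ℝ :=
  ‖Matrix.toEuclideanCLM (𝕜 := ℂ) M‖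

variable {Λ : Type*} [Fintype Λ] [DecidableEq Λ] {d : ℕ}

/-- `O` is supported on `Z ⊆ Λ`: its matrix elements vanish between configurations differing
outside `Z`, and depend only on the restrictions of the configurations to `Z`. -/
def SupportedOn (O : Op Λ d) (Z : Set Λ) : Prop :=
  (∀ x y : Config Λ d, (∃ i ∉ Z, x i ≠ y i) → O x y = 0) ∧
  (∀ x y x' y' : Config Λ d,
    (∀ i ∉ Z, x i = y i) → (∀ i ∉ Z, x' i = y' i) →
    (∀ i ∈ Z, x i = x' i) → (∀ i ∈ Z, y i = y' i) → O x y = O x' y')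

/-- The operator acting as the `d × d` matrix `m` at site `i` and as the identity elsewhere. -/
def siteOp (i : Λ) (m : Matrix (Fin d) (Fin d) ℂ) : Op Λ d :=
  fun x y => if ∀ j, j ≠ i → x j = y j then m (x i) (y i) else 0

/-- The rank-one projection `|e⟩⟨e|` onto a unit vector `e ∈ ℂ^d`. -/
def projMat (e : Fin d → ℂ) : Matrix (Fin d) (Fin d) ℂ :=
  Matrix.vecMulVec e (star e)

/-- The reduced density matrix of the state `Ω` at the single site `i`:
`(ρ_i)_{a,b} = ∑_y Ω(a⊔y) conj (Ω(b⊔y))`. -/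
noncomputable def reducedAt (Ω : Config Λ d → ℂ) (i : Λ) : Matrix (Fin d) (Fin d) ℂ :=
  fun a b => ∑ x : Config Λ d,
    if x i = a then Ω x * (starRingEnd ℂ) (Ω (Function.update x i b)) else 0

/-- `A` is a Hermitian `1`-local `1`-extensive operator supported on `W`:
`A = ∑_j b_j` with each `b_j` Hermitian, supported on the single site `j`, vanishing for
`j ∉ W`, and of operator norm at most `1`. -/
def OneLocalOneExtensive (A : Op Λ d) (W : Set Λ) : Prop :=
  ∃ b : Λ → Op Λ d,
    (∀ j, (b j).IsHermitian) ∧ (∀ j, SupportedOn (b j) {j}) ∧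
    (∀ j, j ∉ W → b j = 0) ∧ (∀ j, opNorm (b j) ≤ 1) ∧ A = ∑ j, b j

/-- The all-to-all condition at site `i`:  `Ĥ_i := ∑_{Z ∋ i} h_Z` decomposes as
`Ĥ_i = V_i + (1/n) ∑_s J_s H_{i,s} H_{Λ_i,s}` with `‖V_i‖ ≤ g₀`, `∑_s |J_s| ≤ g₁`, the `H_{i,s}`
Hermitian supported on `{i}` with norm at most `1`, and the `H_{Λ_i,s}` Hermitian `1`-local
`1`-extensive operators supported on `Λ∖{i}`. -/
def AllToAllAt (h : Finset Λ → Op Λ d) (i : Λ) (n : ℕ) (g₀ g₁ : ℝ) : Prop :=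
  ∃ (S : ℕ) (J : Fin S → ℝ) (V : Op Λ d) (Hi HL : Fin S → Op Λ d),
    V.IsHermitian ∧ SupportedOn V {i} ∧ opNorm V ≤ g₀ ∧
    (∑ s, |J s|) ≤ g₁ ∧
    (∀ s, (Hi s).IsHermitian ∧ SupportedOn (Hi s) {i} ∧ opNorm (Hi s) ≤ 1) ∧
    (∀ s, (HL s).IsHermitian ∧ OneLocalOneExtensive (HL s) ({i}ᶜ : Set Λ)) ∧
    (∑ Z ∈ Finset.univ.filter (fun Z : Finset Λ => i ∈ Z), h Z)
      = V + ((n : ℂ))⁻¹ • ∑ s, (J s : ℂ) • (Hi s * HL s)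

/-- `P` is the spectral projection of the Hermitian matrix `A` onto the eigenvalues `≤ z`:
`P` is a Hermitian idempotent fixing every eigenvector of `A` with eigenvalue `≤ z` and
annihilating every eigenvector with eigenvalue `> z`. -/
def IsSpectralProjLE {m : Type*} [Fintype m] (A P : Matrix m m ℂ) (z : ℝ) : Prop :=
  P.IsHermitian ∧ P * P = P ∧
  (∀ μ : ℝ, μ ≤ z → ∀ v : m → ℂ, A.mulVec v = (μ : ℂ) • v → P.mulVec v = v) ∧
  (∀ μ : ℝ, z < μ → ∀ v : m → ℂ, A.mulVec v = (μ : ℂ) • v → P.mulVec v = 0)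



section Bridge
set_option linter.unusedSectionVars false
noncomputable def toE {m : Type*} [Fintype m] (v : m → ℂ) : EuclideanSpace ℂ m :=
  (WithLp.equiv 2 _).symm v

variable {m : Type*} [Fintype m] [DecidableEq m]

lemma toE_mulVec (M : Matrix m m ℂ) (v : m → ℂ) :
    Matrix.toEuclideanCLM (𝕜 := ℂ) M (toE v) = toE (M.mulVec v) := by
  simp [toE, Matrix.toEuclideanCLM_toLp, Matrix.toLin'_apply]

omit [DecidableEq m] in
lemma norm_toE (v : m → ℂ) : ‖toE v‖ = Real.sqrt (∑ x, ‖v x‖ ^ 2) := by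
  simpa [toE] using EuclideanSpace.norm_eq ((WithLp.equiv 2 _).symm v)

omit [DecidableEq m] in
lemma inner_toE (v w : m → ℂ) : (inner ℂ (toE v) (toE w) : ℂ) = star v ⬝ᵥ w :=
  (EuclideanSpace.inner_eq_star_dotProduct _ _).trans (dotProduct_comm _ _)

lemma toE_add (v w : m → ℂ) : toE (v + w) = toE v + toE w := rfl
lemma toE_smul (c : ℂ) (v : m → ℂ) : toE (c • v) = c • toE v := rfl

lemma nrm_mulVec_le (M : Matrix m m ℂ) (v : m → ℂ) :
    ‖toE (M.mulVec v)‖ ≤ opNorm M * ‖toE v‖ := by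
  rw [← toE_mulVec]; exact (Matrix.toEuclideanCLM (𝕜 := ℂ) M).le_opNorm _

omit [DecidableEq m] in
lemma abs_ip_le (v w : m → ℂ) : ‖star v ⬝ᵥ w‖ ≤ ‖toE v‖ * ‖toE w‖ := by
  rw [← inner_toE]; exact norm_inner_le_norm _ _

lemma abs_expect_le (M : Matrix m m ℂ) (v w : m → ℂ) :
    ‖star v ⬝ᵥ M.mulVec w‖ ≤ ‖toE v‖ * (opNorm M * ‖toE w‖) :=
  (abs_ip_le v _).trans (by
    have := nrm_mulVec_le M w
    have h0 : (0:ℝ) ≤ ‖toE v‖ := norm_nonneg _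
    nlinarith [norm_nonneg (toE (M.mulVec w))])

lemma opNorm_mul_le (A B : Matrix m m ℂ) : opNorm (A * B) ≤ opNorm A * opNorm B := by
  simp only [opNorm, _root_.map_mul]; exact norm_mul_le _ _

lemma opNorm_sub_le (A B : Matrix m m ℂ) : opNorm (A - B) ≤ opNorm A + opNorm B := by
  simp only [opNorm, map_sub]; exact norm_sub_le _ _

lemma opNorm_nonneg (A : Matrix m m ℂ) : 0 ≤ opNorm A := norm_nonneg _

lemma opNorm_conjTranspose (A : Matrix m m ℂ) : opNorm Aᴴ = opNorm A := by
  rw [opNorm, ← Matrix.star_eq_conjTranspose, map_star,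
    ContinuousLinearMap.star_eq_adjoint]
  exact ContinuousLinearMap.adjoint.norm_map _

lemma opNorm_unitary (u : Matrix m m ℂ) (hu : uᴴ * u = 1) : opNorm u ≤ 1 := by
  have h1 : ‖(1 : EuclideanSpace ℂ m →L[ℂ] EuclideanSpace ℂ m)‖ ≤ 1 :=
    ContinuousLinearMap.norm_id_le
  have h2 : opNorm u * opNorm u ≤ 1 := by
    have he : star (Matrix.toEuclideanCLM (𝕜 := ℂ) u) * Matrix.toEuclideanCLM (𝕜 := ℂ) u = 1 := by
      rw [← map_star, ← _root_.map_mul, Matrix.star_eq_conjTranspose, hu, _root_.map_one]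
    calc opNorm u * opNorm u
        = ‖star (Matrix.toEuclideanCLM (𝕜 := ℂ) u) * Matrix.toEuclideanCLM (𝕜 := ℂ) u‖ :=
          (CStarRing.norm_star_mul_self).symm
      _ ≤ 1 := by rw [he]; exact h1
  nlinarith [opNorm_nonneg u]

lemma opNorm_sum_le {ι : Type*} (s : Finset ι) (f : ι → Matrix m m ℂ) :
    opNorm (∑ j ∈ s, f j) ≤ ∑ j ∈ s, opNorm (f j) := by
  simp only [opNorm, map_sum]; exact norm_sum_le _ _

lemma opNorm_commutator_le (A B : Matrix m m ℂ) :
    opNorm (A * B - B * A) ≤ 2 * (opNorm A * opNorm B) := by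
  have h := opNorm_sub_le (A * B) (B * A)
  have h1 := opNorm_mul_le A B
  have h2 := opNorm_mul_le B A
  nlinarith [opNorm_nonneg A, opNorm_nonneg B]

lemma opNorm_zero {m : Type*} [Fintype m] [DecidableEq m] : opNorm (0 : Matrix m m ℂ) = 0 := by
  rw [opNorm, map_zero, norm_zero]

lemma ip_self {m : Type*} [Fintype m] (v : m → ℂ) :
    star v ⬝ᵥ v = ((∑ x, ‖v x‖ ^ 2 : ℝ) : ℂ) := by
  rw [dotProduct]
  push_cast
  refine Finset.sum_congr rfl fun x _ => ?_
  rw [Pi.star_apply, Complex.star_def, RCLike.conj_mul]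
  norm_cast

noncomputable def expectVec {m : Type*} [Fintype m] (v : m → ℂ) :
    Matrix m m ℂ →ₗ[ℂ] ℂ where
  toFun M := star v ⬝ᵥ M.mulVec v
  map_add' A B := by simp [Matrix.add_mulVec]
  map_smul' c A := by simp [Matrix.smul_mulVec]

lemma expectVec_apply {m : Type*} [Fintype m] (v : m → ℂ) (M : Matrix m m ℂ) :
    expectVec v M = star v ⬝ᵥ M.mulVec v := rfl

end Bridge

section SupportAux
set_option linter.unusedSectionVars false

lemma supportedOn_zero (Z : Set Λ) : SupportedOn (0 : Op Λ d) Z :=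
  ⟨fun _ _ _ => rfl, fun _ _ _ _ _ _ _ _ => rfl⟩

lemma supportedOn_add {A B : Op Λ d} {Z : Set Λ} (hA : SupportedOn A Z) (hB : SupportedOn B Z) :
    SupportedOn (A + B) Z := by
  refine ⟨fun x y h => ?_, fun x y x' y' h1 h2 h3 h4 => ?_⟩
  · simp [Matrix.add_apply, hA.1 x y h, hB.1 x y h]
  · simp [Matrix.add_apply, hA.2 x y x' y' h1 h2 h3 h4, hB.2 x y x' y' h1 h2 h3 h4]

lemma supportedOn_sub {A B : Op Λ d} {Z : Set Λ} (hA : SupportedOn A Z) (hB : SupportedOn B Z) :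
    SupportedOn (A - B) Z := by
  refine ⟨fun x y h => ?_, fun x y x' y' h1 h2 h3 h4 => ?_⟩
  · simp [Matrix.sub_apply, hA.1 x y h, hB.1 x y h]
  · simp [Matrix.sub_apply, hA.2 x y x' y' h1 h2 h3 h4, hB.2 x y x' y' h1 h2 h3 h4]

lemma supportedOn_sum {ι : Type*} (s : Finset ι) (f : ι → Op Λ d) (Z : Set Λ)
    (h : ∀ j ∈ s, SupportedOn (f j) Z) : SupportedOn (∑ j ∈ s, f j) Z := by
  classical
  induction s using Finset.induction_on with
  | empty => simpa using supportedOn_zero Z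
  | insert a s hx ih =>
    rw [Finset.sum_insert hx]
    exact supportedOn_add (h _ (Finset.mem_insert_self _ _))
      (ih fun j hj => h j (Finset.mem_insert_of_mem hj))

lemma supportedOn_mono {A : Op Λ d} {W Z : Set Λ} (hA : SupportedOn A W) (hWZ : W ⊆ Z) :
    SupportedOn A Z := by
  refine ⟨fun x y ⟨l, hl, hne⟩ => hA.1 x y ⟨l, fun hlW => hl (hWZ hlW), hne⟩,
    fun x y x' y' h1 h2 h3 h4 => ?_⟩
  by_cases hxy : ∀ l ∉ W, x l = y l
  · refine hA.2 x y x' y' hxy (fun l hl => ?_) (fun l hl => hWZ hl |> h3 l) (fun l hl => hWZ hl |> h4 l)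
    by_cases hlZ : l ∈ Z
    · rw [← h3 l hlZ, ← h4 l hlZ]; exact hxy l hl
    · exact h2 l hlZ
  · push_neg at hxy
    obtain ⟨l, hlW, hne⟩ := hxy
    have hlZ : l ∈ Z := by
      by_contra hlZ; exact hne (h1 l hlZ)
    rw [hA.1 x y ⟨l, hlW, hne⟩, hA.1 x' y' ⟨l, hlW, by rw [← h3 l hlZ, ← h4 l hlZ]; exact hne⟩]

lemma supportedOn_mul {A B : Op Λ d} {Z : Set Λ} (hA : SupportedOn A Z) (hB : SupportedOn B Z) :
    SupportedOn (A * B) Z := by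
  classical
  constructor
  · rintro x y ⟨l, hl, hne⟩
    rw [Matrix.mul_apply]
    refine Finset.sum_eq_zero fun z _ => ?_
    by_cases hz : z l = x l
    · rw [hB.1 z y ⟨l, hl, by rw [hz]; exact hne⟩, mul_zero]
    · rw [hA.1 x z ⟨l, hl, fun h => hz h.symm⟩, zero_mul]
  · intro x y x' y' h1 h2 h3 h4
    rw [Matrix.mul_apply, Matrix.mul_apply]
    let σ : Config Λ d ≃ Config Λ d :=
      { toFun := fun z l => if l ∈ Z then z l else Equiv.swap (x l) (x' l) (z l)
        invFun := fun z l => if l ∈ Z then z l else Equiv.swap (x l) (x' l) (z l)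
        left_inv := fun z => funext fun l => by by_cases hl : l ∈ Z <;> simp [hl]
        right_inv := fun z => funext fun l => by by_cases hl : l ∈ Z <;> simp [hl] }
    refine Fintype.sum_equiv σ _ _ fun z => ?_
    have hσ : ∀ l, σ z l = if l ∈ Z then z l else Equiv.swap (x l) (x' l) (z l) :=
      fun l => rfl
    by_cases hz : ∀ l ∉ Z, z l = x l
    · have hσz : ∀ l ∉ Z, σ z l = x' l := fun l hl => by
        rw [hσ l, if_neg hl, hz l hl, Equiv.swap_apply_left]
      have hσzZ : ∀ l ∈ Z, z l = σ z l := fun l hl => by rw [hσ l, if_pos hl]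
      have e1 : A x z = A x' (σ z) :=
        hA.2 x z x' (σ z) (fun l hl => (hz l hl).symm) (fun l hl => (hσz l hl).symm) h3 hσzZ
      have e2 : B z y = B (σ z) y' :=
        hB.2 z y (σ z) y' (fun l hl => by rw [hz l hl, h1 l hl])
          (fun l hl => by rw [hσz l hl, h2 l hl]) hσzZ h4
      rw [e1, e2]
    · push_neg at hz
      obtain ⟨l, hl, hne⟩ := hz
      have hA1 : A x z = 0 := hA.1 x z ⟨l, hl, fun h => hne h.symm⟩
      have hA2 : A x' (σ z) = 0 := by
        refine hA.1 x' (σ z) ⟨l, hl, fun h => ?_⟩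
        rw [hσ l, if_neg hl] at h
        exact hne ((Equiv.swap (x l) (x' l)).injective
          (h.symm.trans (Equiv.swap_apply_left (x l) (x' l)).symm))
      rw [hA1, hA2, zero_mul, zero_mul]

/-- An operator supported on a singleton commutes with an operator supported away from it. -/
lemma commute_singleton {A B : Op Λ d} {j : Λ} {Z : Set Λ}
    (hA : SupportedOn A {j}) (hB : SupportedOn B Z) (hj : j ∉ Z) : A * B = B * A := by
  classical
  ext x y
  rw [Matrix.mul_apply, Matrix.mul_apply]
  have hL : ∑ z, A x z * B z y = A x (Function.update x j (y j)) * B (Function.update x j (y j)) y := by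
    refine Finset.sum_eq_single _ (fun z _ hz => ?_) (fun h => absurd (Finset.mem_univ _) h)
    by_cases hzx : ∀ l, l ≠ j → z l = x l
    · have hzj : z j ≠ y j := by
        intro h
        exact hz (funext fun l => by
          by_cases hlj : l = j
          · subst hlj; simp [h]
          · simp [Function.update_of_ne hlj, hzx l hlj])
      rw [hB.1 z y ⟨j, hj, hzj⟩, mul_zero]
    · push_neg at hzx
      obtain ⟨l, hlj, hne⟩ := hzx
      rw [hA.1 x z ⟨l, by simp [hlj], fun h => hne (by rw [h])⟩, zero_mul]
  have hR : ∑ z, B x z * A z y = B x (Function.update y j (x j)) * A (Function.update y j (x j)) y := by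
    refine Finset.sum_eq_single _ (fun z _ hz => ?_) (fun h => absurd (Finset.mem_univ _) h)
    by_cases hzy : ∀ l, l ≠ j → z l = y l
    · have hzj : z j ≠ x j := by
        intro h
        exact hz (funext fun l => by
          by_cases hlj : l = j
          · subst hlj; simp [h]
          · simp [Function.update_of_ne hlj, hzy l hlj])
      rw [hB.1 x z ⟨j, hj, fun h => hzj h.symm⟩, zero_mul]
    · push_neg at hzy
      obtain ⟨l, hlj, hne⟩ := hzy
      rw [hA.1 z y ⟨l, by simp [hlj], hne⟩, mul_zero]
  rw [hL, hR]
  have eA : A x (Function.update x j (y j)) = A (Function.update y j (x j)) y := by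
    refine hA.2 _ _ _ _ (fun l hl => ?_) (fun l hl => ?_) (fun l hl => ?_) (fun l hl => ?_)
    · simp only [Set.mem_singleton_iff] at hl; rw [Function.update_of_ne hl]
    · simp only [Set.mem_singleton_iff] at hl; rw [Function.update_of_ne hl]
    · simp only [Set.mem_singleton_iff] at hl; subst hl; simp
    · simp only [Set.mem_singleton_iff] at hl; subst hl; simp
  have eB : B (Function.update x j (y j)) y = B x (Function.update y j (x j)) := by
    by_cases hxy : ∀ l ∉ Z, l ≠ j → x l = y l
    · refine hB.2 _ _ _ _ (fun l hl => ?_) (fun l hl => ?_) (fun l hl => ?_) (fun l hl => ?_)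
      · by_cases hlj : l = j
        · subst hlj; simp
        · rw [Function.update_of_ne hlj]; exact hxy l hl hlj
      · by_cases hlj : l = j
        · subst hlj; simp
        · rw [Function.update_of_ne hlj]; exact hxy l hl hlj
      · rw [Function.update_of_ne (fun h => hj (by subst h; exact hl))]
      · rw [Function.update_of_ne (fun h => hj (by subst h; exact hl))]
    · push_neg at hxy
      obtain ⟨l, hl, hlj, hne⟩ := hxy
      rw [hB.1 _ y ⟨l, hl, by rw [Function.update_of_ne hlj]; exact hne⟩,
        hB.1 x _ ⟨l, hl, by rw [Function.update_of_ne hlj]; exact hne⟩]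
  rw [eA, eB]; ring


lemma sum_config_update (x : Config Λ d) (i : Λ) (f : Config Λ d → ℂ)
    (hf : ∀ z, (∃ j, j ≠ i ∧ z j ≠ x j) → f z = 0) :
    ∑ z, f z = ∑ c, f (Function.update x i c) := by
  classical
  have hinj : ∀ a ∈ Finset.univ, ∀ b ∈ Finset.univ,
      Function.update x i a = Function.update x i b → a = b := by
    intro a _ b _ hab
    have := congrFun hab i
    simpa using this
  rw [← Finset.sum_image (g := fun c : Fin d => Function.update x i c) (f := f) hinj]
  refine (Finset.sum_subset (Finset.subset_univ _) fun z _ hz => ?_).symm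
  refine hf z ?_
  by_contra hcon
  push_neg at hcon
  refine hz (Finset.mem_image.2 ⟨z i, Finset.mem_univ _, ?_⟩)
  funext l
  by_cases hl : l = i
  · subst hl; simp
  · rw [Function.update_of_ne hl]; exact (hcon l hl).symm

lemma siteOp_supported (i : Λ) (m : Matrix (Fin d) (Fin d) ℂ) :
    SupportedOn (siteOp i m) {i} := by
  constructor
  · rintro x y ⟨l, hl, hne⟩
    simp only [Set.mem_singleton_iff] at hl
    rw [siteOp, if_neg]
    push_neg
    exact ⟨l, hl, hne⟩
  · intro x y x' y' h1 h2 h3 h4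
    simp only [Set.mem_singleton_iff] at h1 h2 h3 h4
    have hi : x i = x' i := h3 i rfl
    have hi' : y i = y' i := h4 i rfl
    rw [siteOp, if_pos h1, siteOp, if_pos h2, hi, hi']

lemma siteOp_mul (i : Λ) (a b : Matrix (Fin d) (Fin d) ℂ) :
    siteOp i a * siteOp i b = siteOp i (a * b) := by
  classical
  ext x y
  rw [Matrix.mul_apply]
  rw [sum_config_update x i _ (fun z ⟨j, hj, hne⟩ => by
    rw [siteOp, if_neg, zero_mul]
    push_neg
    exact ⟨j, hj, fun h => hne h.symm⟩)]
  by_cases h : ∀ j, j ≠ i → x j = y j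
  · have : ∀ c, siteOp i a x (Function.update x i c) * siteOp i b (Function.update x i c) y
        = a (x i) c * b c (y i) := by
      intro c
      rw [siteOp, if_pos (fun j hj => (Function.update_of_ne hj _ _).symm),
        Function.update_self, siteOp, if_pos (fun j hj => by
          rw [Function.update_of_ne hj]; exact h j hj), Function.update_self]
    simp only [this]
    rw [siteOp, if_pos h, Matrix.mul_apply]
  · have : ∀ c, siteOp i a x (Function.update x i c) * siteOp i b (Function.update x i c) y
        = 0 := by
      intro c
      have hcond : ¬ ∀ j, j ≠ i → Function.update x i c j = y j := fun hcon =>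
        h fun j hj => by rw [← hcon j hj, Function.update_of_ne hj]
      simp only [siteOp, if_neg hcond, mul_zero]
    simp only [this]
    rw [siteOp, if_neg h, Finset.sum_const, smul_zero]

lemma siteOp_one (i : Λ) : siteOp i (1 : Matrix (Fin d) (Fin d) ℂ) = 1 := by
  ext x y
  by_cases h : ∀ j, j ≠ i → x j = y j
  · rw [siteOp, if_pos h]
    by_cases hxy : x i = y i
    · have : x = y := funext fun j => by
        by_cases hj : j = i
        · subst hj; exact hxy
        · exact h j hj
      rw [hxy, Matrix.one_apply_eq, this, Matrix.one_apply_eq]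
    · rw [Matrix.one_apply_ne hxy, Matrix.one_apply_ne (fun hc => hxy (congrFun hc i))]
  · rw [siteOp, if_neg h, Matrix.one_apply_ne]
    intro hc
    exact h fun j _ => congrFun hc j

lemma siteOp_conjTranspose (i : Λ) (m : Matrix (Fin d) (Fin d) ℂ) :
    (siteOp i m)ᴴ = siteOp i mᴴ := by
  ext x y
  rw [Matrix.conjTranspose_apply, siteOp, siteOp]
  by_cases h : ∀ j, j ≠ i → x j = y j
  · rw [if_pos h, if_pos (fun j hj => (h j hj).symm), Matrix.conjTranspose_apply]
  · rw [if_neg h, if_neg, star_zero]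
    intro hc
    exact h fun j hj => (hc j hj).symm

lemma supported_singleton_eq {A : Op Λ d} {i : Λ} (hA : SupportedOn A {i})
    (x₀ : Config Λ d) :
    A = siteOp i (fun a b => A (Function.update x₀ i a) (Function.update x₀ i b)) := by
  ext x y
  by_cases h : ∀ j, j ≠ i → x j = y j
  · unfold siteOp; rw [if_pos h]
    refine hA.2 x y _ _ (fun l hl => ?_) (fun l hl => ?_) (fun l hl => ?_) (fun l hl => ?_)
    · simp only [Set.mem_singleton_iff] at hl; exact h l hl
    · simp only [Set.mem_singleton_iff] at hl
      rw [Function.update_of_ne hl, Function.update_of_ne hl]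
    · simp only [Set.mem_singleton_iff] at hl; subst hl; simp
    · simp only [Set.mem_singleton_iff] at hl; subst hl; simp
  · unfold siteOp; rw [if_neg h]
    push_neg at h
    obtain ⟨j, hj, hne⟩ := h
    exact hA.1 x y ⟨j, by simpa using hj, hne⟩

/-- Expectation of a single-site operator in terms of the reduced density matrix. -/
lemma expect_siteOp (Ω : Config Λ d → ℂ) (i : Λ) (m : Matrix (Fin d) (Fin d) ℂ) :
    star Ω ⬝ᵥ (siteOp i m).mulVec Ω = (reducedAt Ω i * m).trace := by
  classical
  have hL : star Ω ⬝ᵥ (siteOp i m).mulVec Ω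
      = ∑ x : Config Λ d, ∑ c : Fin d,
          (starRingEnd ℂ) (Ω x) * (m (x i) c * Ω (Function.update x i c)) := by
    rw [dotProduct]
    refine Finset.sum_congr rfl fun x _ => ?_
    rw [Matrix.mulVec, dotProduct]
    rw [sum_config_update x i _ (fun z ⟨j, hj, hne⟩ => by
      rw [siteOp, if_neg, zero_mul]
      push_neg
      exact ⟨j, hj, fun hc => hne hc.symm⟩)]
    rw [Finset.mul_sum]
    refine Finset.sum_congr rfl fun c _ => ?_
    rw [Pi.star_apply, siteOp, if_pos (fun j hj => (Function.update_of_ne hj _ _).symm),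
      Function.update_self, Complex.star_def]
  have hR : (reducedAt Ω i * m).trace
      = ∑ c : Fin d, ∑ x : Config Λ d,
          Ω x * (starRingEnd ℂ) (Ω (Function.update x i c)) * m c (x i) := by
    calc (reducedAt Ω i * m).trace
        = ∑ a, ∑ c, reducedAt Ω i a c * m c a := by
          rw [Matrix.trace]
          exact Finset.sum_congr rfl fun a _ => Matrix.mul_apply
      _ = ∑ c, ∑ a, reducedAt Ω i a c * m c a := Finset.sum_comm
      _ = ∑ c : Fin d, ∑ x : Config Λ d,
          Ω x * (starRingEnd ℂ) (Ω (Function.update x i c)) * m c (x i) := by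
          refine Finset.sum_congr rfl fun c _ => ?_
          calc ∑ a, reducedAt Ω i a c * m c a
              = ∑ a, ∑ x : Config Λ d,
                  (if x i = a then Ω x * (starRingEnd ℂ) (Ω (Function.update x i c)) else 0)
                    * m c a := by
                refine Finset.sum_congr rfl fun a _ => ?_
                rw [reducedAt, Finset.sum_mul]
            _ = ∑ x : Config Λ d, ∑ a,
                  (if x i = a then Ω x * (starRingEnd ℂ) (Ω (Function.update x i c)) else 0)
                    * m c a := Finset.sum_comm
            _ = ∑ x : Config Λ d,
                  Ω x * (starRingEnd ℂ) (Ω (Function.update x i c)) * m c (x i) := by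
                refine Finset.sum_congr rfl fun x _ => ?_
                simp only [ite_mul, zero_mul]
                exact (Finset.sum_ite_eq Finset.univ (x i) _).trans
                  (if_pos (Finset.mem_univ _))
  rw [hL, hR, ← Finset.sum_product', ← Finset.sum_product']
  refine Fintype.sum_equiv
    ⟨fun p : Config Λ d × Fin d => ((p.1 i : Fin d), Function.update p.1 i p.2),
     fun p : Fin d × Config Λ d => (Function.update p.2 i p.1, p.2 i),
     fun p => by simp [Function.update_idem, Function.update_eq_self],
     fun p => by simp [Function.update_idem, Function.update_eq_self]⟩ _ _ fun p => ?_
  obtain ⟨x, c⟩ := p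
  simp only [Equiv.coe_fn_mk, Function.update_self, Function.update_idem]
  rw [Function.update_eq_self]
  ring

end SupportAux

set_option maxHeartbeats 4000000 in
/-- **Robustness of the ground state under local unitaries (Proposition 1).**
In the qudit lattice setting, `H = ∑_{|Z| ≤ k} h_Z` with `∑_{Z ∋ i'} ‖h_Z‖ ≤ g₀ + g₁` for every
site `i'`, simple smallest eigenvalue `E₀`, unit ground state `Ω` and gap `Δ > 0`, satisfying the
all-to-all condition at the site `i`.  If `u₀` is a `d × d` unitary leaving the reduced density
matrix `ρ_i` of `Ω` at site `i` invariant, and `u` is the operator acting as `u₀` at site `i`,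
then `|⟨Ω, (u†Hu − H)Ω⟩| ≤ δ_Rob := 2γg₁√((g₀+g₁)/(nΔ))` with `γ = √(18k(k+1))`. -/
theorem ground_state_local_unitary_robustness
    {Λ : Type*} [Fintype Λ] [DecidableEq Λ] (d : ℕ) (hd : 2 ≤ d)
    (n : ℕ) (hn : n = Fintype.card Λ) (hn2 : 2 ≤ n)
    (k : ℕ) (hk : 1 ≤ k) (g₀ g₁ : ℝ)
    (h : Finset Λ → Op Λ d)
    (hherm : ∀ Z, (h Z).IsHermitian)
    (hsupp : ∀ Z : Finset Λ, SupportedOn (h Z) (Z : Set Λ))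
    (hloc : ∀ Z : Finset Λ, k < Z.card → h Z = 0)
    (hext : ∀ i' : Λ,
      ∑ Z ∈ Finset.univ.filter (fun Z : Finset Λ => i' ∈ Z), opNorm (h Z) ≤ g₀ + g₁)
    (H : Op Λ d) (hHdef : H = ∑ Z, h Z)
    (E₀ Δ : ℝ) (hΔ : 0 < Δ)
    (Ω : Config Λ d → ℂ) (hΩ : ∑ x, ‖Ω x‖ ^ 2 = 1)
    (heig : H.mulVec Ω = (E₀ : ℂ) • Ω)
    (hmin : ∀ ψ : Config Λ d → ℂ, ∑ x, ‖ψ x‖ ^ 2 = 1 → E₀ ≤ (star ψ ⬝ᵥ H.mulVec ψ).re)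
    (hsimple : ∀ ψ : Config Λ d → ℂ, H.mulVec ψ = (E₀ : ℂ) • ψ → ∃ c : ℂ, ψ = c • Ω)
    (hgap : ∀ ψ : Config Λ d → ℂ, ∑ x, ‖ψ x‖ ^ 2 = 1 → star Ω ⬝ᵥ ψ = 0 →
      E₀ + Δ ≤ (star ψ ⬝ᵥ H.mulVec ψ).re)
    (i : Λ) (hata : AllToAllAt h i n g₀ g₁)
    (u₀ : Matrix (Fin d) (Fin d) ℂ) (hu₀ : u₀ ∈ Matrix.unitaryGroup (Fin d) ℂ)
    (hinv : u₀ * reducedAt Ω i * u₀ᴴ = reducedAt Ω i)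
    (u : Op Λ d) (hu : u = siteOp i u₀)
    (γ δRob : ℝ) (hγ : γ = Real.sqrt (18 * (k : ℝ) * (k + 1)))
    (hδ : δRob = 2 * γ * g₁ * Real.sqrt ((g₀ + g₁) / (n * Δ))) :
    ‖star Ω ⬝ᵥ ((uᴴ * H * u - H).mulVec Ω)‖ ≤ δRob := by
  classical
  have hdpos : 0 < d := by omega
  have hnpos : 0 < (n : ℝ) := by exact_mod_cast Nat.lt_of_lt_of_le Nat.zero_lt_two hn2
  -- positivity facts
  have hgg : 0 ≤ g₀ + g₁ := le_trans (Finset.sum_nonneg fun Z _ => opNorm_nonneg (h Z)) (hext i)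
  obtain ⟨S, J, V, Hi, HL, hVherm, hVsupp, hVnorm, hJ, hHi, hHL, hdec⟩ := hata
  have hg₁ : 0 ≤ g₁ := le_trans (Finset.sum_nonneg fun s _ => abs_nonneg (J s)) hJ
  have hΩE : ‖toE Ω‖ = 1 := by rw [norm_toE, hΩ, Real.sqrt_one]
  have hip1 : star Ω ⬝ᵥ Ω = 1 := by rw [ip_self, hΩ]; norm_num
  -- unitarity of u
  have husupp : SupportedOn u {i} := hu ▸ siteOp_supported i u₀
  have hu₀l : u₀ᴴ * u₀ = 1 := by
    have := hu₀.1
    rwa [Matrix.star_eq_conjTranspose] at this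
  have hu₀r : u₀ * u₀ᴴ = 1 := by
    have := hu₀.2
    rwa [Matrix.star_eq_conjTranspose] at this
  have huu : uᴴ * u = 1 := by
    rw [hu, siteOp_conjTranspose, siteOp_mul, hu₀l, siteOp_one]
  have huu' : u * uᴴ = 1 := by
    rw [hu, siteOp_conjTranspose, siteOp_mul, hu₀r, siteOp_one]
  have hunorm : opNorm u ≤ 1 := opNorm_unitary u huu
  have hucnorm : opNorm uᴴ ≤ 1 := by rw [opNorm_conjTranspose]; exact hunorm
  -- Step A : reduce to the terms containing site i
  set F : Finset (Finset Λ) := Finset.univ.filter (fun Z : Finset Λ => i ∈ Z) with hF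
  set Hhat : Op Λ d := ∑ Z ∈ F, h Z with hHhat
  have hcommZ : ∀ Z : Finset Λ, i ∉ Z → u * h Z = h Z * u := fun Z hZ =>
    commute_singleton husupp (hsupp Z) (by simpa using hZ)
  have hstepA : uᴴ * H * u - H = uᴴ * Hhat * u - Hhat := by
    set G : Op Λ d := ∑ Z ∈ Finset.univ.filter (fun Z : Finset Λ => ¬ i ∈ Z), h Z with hG
    have hsplit : H = Hhat + G := by
      rw [hHdef, hHhat, hG, hF, Finset.sum_filter_add_sum_filter_not]
    have hGcomm : u * G = G * u := by
      rw [hG, Finset.mul_sum, Finset.sum_mul]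
      exact Finset.sum_congr rfl fun Z hZ => hcommZ Z (Finset.mem_filter.1 hZ).2
    have hGu : uᴴ * G * u = G := by
      calc uᴴ * G * u = uᴴ * (G * u) := by rw [mul_assoc]
        _ = uᴴ * (u * G) := by rw [← hGcomm]
        _ = uᴴ * u * G := by rw [mul_assoc]
        _ = G := by rw [huu, one_mul]
    calc uᴴ * H * u - H = uᴴ * Hhat * u + uᴴ * G * u - (Hhat + G) := by
          rw [hsplit, mul_add, add_mul]
      _ = uᴴ * Hhat * u - Hhat := by rw [hGu]; abel
  -- the commutation of u with each HL s
  have hHLcomm : ∀ s, u * HL s = HL s * u := by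
    intro s
    obtain ⟨b, hb1, hb2, hb3, hb4, hb5⟩ := (hHL s).2
    rw [hb5, Finset.mul_sum, Finset.sum_mul]
    refine Finset.sum_congr rfl fun j _ => ?_
    by_cases hj : j = i
    · subst hj; rw [hb3 j (by simp), mul_zero, zero_mul]
    · exact (commute_singleton (hb2 j) husupp
        (by simpa using fun hc : j = i => hj hc)).symm
  -- Step B : decomposition of the rotated Hamiltonian
  have hBdec : uᴴ * Hhat * u - Hhat
      = (uᴴ * V * u - V)
        + ((n : ℂ))⁻¹ • ∑ s, (J s : ℂ) • ((uᴴ * Hi s * u - Hi s) * HL s) := by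
    have h1 : Hhat = V + ((n : ℂ))⁻¹ • ∑ s, (J s : ℂ) • (Hi s * HL s) := hdec
    have hterm : ∀ s, uᴴ * (Hi s * HL s) * u = (uᴴ * Hi s * u) * HL s := by
      intro s
      calc uᴴ * (Hi s * HL s) * u = uᴴ * Hi s * (HL s * u) := by
            simp only [mul_assoc]
        _ = uᴴ * Hi s * (u * HL s) := by rw [← hHLcomm s]
        _ = (uᴴ * Hi s * u) * HL s := by rw [← mul_assoc]
    have h2 : uᴴ * Hhat * u
        = uᴴ * V * u + ((n : ℂ))⁻¹ • ∑ s, (J s : ℂ) • ((uᴴ * Hi s * u) * HL s) := by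
      rw [h1, mul_add, add_mul]
      congr 1
      rw [mul_smul_comm, smul_mul_assoc]
      congr 1
      rw [Finset.mul_sum, Finset.sum_mul]
      refine Finset.sum_congr rfl fun s _ => ?_
      rw [mul_smul_comm, smul_mul_assoc, hterm s]
    rw [h2, h1]
    simp only [sub_mul, smul_sub, Finset.sum_sub_distrib]
    abel
  -- expectation functional
  set Ex : Op Λ d →ₗ[ℂ] ℂ := expectVec Ω with hEx
  -- invariance of single-site expectations under the unitary
  have hinvE : ∀ A : Op Λ d, SupportedOn A {i} → Ex (uᴴ * A * u) = Ex A := by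
    intro A hA
    set x₀ : Config Λ d := fun _ => ⟨0, hdpos⟩ with hx₀
    set mA : Matrix (Fin d) (Fin d) ℂ :=
      fun a b => A (Function.update x₀ i a) (Function.update x₀ i b) with hmA
    have hA' : A = siteOp i mA := supported_singleton_eq hA x₀
    have hconj : uᴴ * A * u = siteOp i (u₀ᴴ * mA * u₀) := by
      rw [hu, hA', siteOp_conjTranspose, siteOp_mul, siteOp_mul]
    rw [hconj]
    conv_rhs => rw [hA']
    rw [hEx, expectVec_apply, expectVec_apply, expect_siteOp, expect_siteOp]
    calc (reducedAt Ω i * (u₀ᴴ * mA * u₀)).trace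
        = ((reducedAt Ω i * u₀ᴴ * mA) * u₀).trace := by rw [← mul_assoc, ← mul_assoc]
      _ = (u₀ * (reducedAt Ω i * u₀ᴴ * mA)).trace := by rw [Matrix.trace_mul_comm]
      _ = ((u₀ * reducedAt Ω i * u₀ᴴ) * mA).trace := by
          rw [← mul_assoc, ← mul_assoc]
      _ = (reducedAt Ω i * mA).trace := by rw [hinv]
  have hVzero : Ex (uᴴ * V * u - V) = 0 := by
    rw [map_sub, hinvE V hVsupp, sub_self]
  have hBzero : ∀ s, Ex (uᴴ * Hi s * u - Hi s) = 0 := by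
    intro s
    rw [map_sub, hinvE (Hi s) (hHi s).2.1, sub_self]
  -- ground state fluctuation vectors
  set cc : Fin S → ℂ := fun s => star Ω ⬝ᵥ (HL s).mulVec Ω with hcc
  set δv : Fin S → (Config Λ d → ℂ) := fun s => (HL s).mulVec Ω - cc s • Ω with hδv
  have hδorth : ∀ s, star Ω ⬝ᵥ δv s = 0 := by
    intro s
    rw [hδv]
    simp only [dotProduct_sub, dotProduct_smul, hip1, smul_eq_mul, mul_one]
    exact sub_eq_zero.2 rfl
  -- Hermitian facts
  have hHherm : H.IsHermitian := by
    rw [hHdef, Matrix.IsHermitian, Matrix.conjTranspose_sum]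
    exact Finset.sum_congr rfl fun Z _ => hherm Z
  set D : Op Λ d := H - (E₀ : ℂ) • 1 with hD
  have hDΩ : D.mulVec Ω = 0 := by
    rw [hD, Matrix.sub_mulVec, Matrix.smul_mulVec, Matrix.one_mulVec, heig, sub_self]
  have hDherm : Dᴴ = D := by
    rw [hD, Matrix.conjTranspose_sub, hHherm.eq, Matrix.conjTranspose_smul,
      Matrix.conjTranspose_one, Complex.star_def, Complex.conj_ofReal]
  have hadj : ∀ (M : Op Λ d) (v w : Config Λ d → ℂ),
      star v ⬝ᵥ M.mulVec w = star (Mᴴ.mulVec v) ⬝ᵥ w := by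
    intro M v w
    rw [Matrix.star_mulVec, Matrix.conjTranspose_conjTranspose, ← Matrix.dotProduct_mulVec]
  -- the variance bound
  have hvar : ∀ s, Δ * ‖toE (δv s)‖ ^ 2 ≤ 2 * (k : ℝ) * (n * (g₀ + g₁)) := by
    intro s
    have hA := (hHL s).1
    set A : Op Λ d := HL s with hAdef
    obtain ⟨b, hb1, hb2, hb3, hb4, hb5⟩ := (hHL s).2
    -- double commutator norm bound
    set K : Finset Λ → Op Λ d :=
      fun Z => A * A * h Z - A * h Z * A - A * h Z * A + h Z * A * A with hK
    have hKbound : ∀ Z : Finset Λ, opNorm (K Z) ≤ 4 * (k:ℝ) * (Z.card : ℝ) * opNorm (h Z) := by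
      intro Z
      by_cases hcard : Z.card ≤ k
      · set B : Op Λ d := ∑ j ∈ Z, b j with hB
        set R : Op Λ d := ∑ j ∈ Finset.univ \ Z, b j with hR
        have hAsplit : A = R + B := by
          rw [hB, hR, Finset.sum_sdiff (Finset.subset_univ Z), hAdef]
          exact hb5
        have hBsupp : SupportedOn B (Z : Set Λ) :=
          supportedOn_sum _ _ _ fun j hj =>
            supportedOn_mono (hb2 j) (by simpa using Set.singleton_subset_iff.2 hj)
        have hRcomm : ∀ (M : Op Λ d), SupportedOn M (Z : Set Λ) → R * M = M * R := by
          intro M hM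
          rw [hR, Finset.sum_mul, Finset.mul_sum]
          refine Finset.sum_congr rfl fun j hj => ?_
          have hjZ : j ∉ Z := (Finset.mem_sdiff.1 hj).2
          exact commute_singleton (hb2 j) hM (by simpa using hjZ)
        set W : Op Λ d := B * h Z - h Z * B with hW
        have hWsupp : SupportedOn W (Z : Set Λ) :=
          supportedOn_sub (supportedOn_mul hBsupp (hsupp Z)) (supportedOn_mul (hsupp Z) hBsupp)
        have hW1 : A * h Z - h Z * A = W := by
          rw [hAsplit, hW, add_mul, mul_add, hRcomm (h Z) (hsupp Z)]
          abel
        have hKW : K Z = B * W - W * B := by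
          have e1 : K Z = A * (A * h Z - h Z * A) - (A * h Z - h Z * A) * A := by
            rw [hK]
            simp only [Matrix.mul_sub, Matrix.sub_mul, ← mul_assoc]
            abel
          rw [e1, hW1, hAsplit, add_mul, mul_add, hRcomm W hWsupp]
          abel
        have hBnorm : opNorm B ≤ (Z.card : ℝ) := by
          calc opNorm B ≤ ∑ j ∈ Z, opNorm (b j) := opNorm_sum_le _ _
            _ ≤ ∑ _j ∈ Z, (1:ℝ) := Finset.sum_le_sum fun j _ => hb4 j
            _ = (Z.card : ℝ) := by rw [Finset.sum_const, nsmul_eq_mul, mul_one]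
        have hWnorm : opNorm W ≤ 2 * ((Z.card:ℝ) * opNorm (h Z)) := by
          have := opNorm_commutator_le B (h Z)
          refine le_trans this ?_
          have h0 := opNorm_nonneg (h Z)
          nlinarith [opNorm_nonneg B]
        have hKn : opNorm (K Z) ≤ 2 * (opNorm B * opNorm W) := by
          rw [hKW]; exact opNorm_commutator_le B W
        have hcard' : (Z.card : ℝ) ≤ (k : ℝ) := by exact_mod_cast hcard
        have h0 := opNorm_nonneg (h Z)
        have h0B := opNorm_nonneg B
        have h0W := opNorm_nonneg W
        have hcard0 : (0:ℝ) ≤ (Z.card : ℝ) := Nat.cast_nonneg _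
        nlinarith
      · push_neg at hcard
        have hZ0 : h Z = 0 := hloc Z hcard
        have : K Z = 0 := by rw [hK]; simp [hZ0]
        rw [this, opNorm_zero, hZ0, opNorm_zero, mul_zero]
    -- collect
    have hcount : ∑ Z : Finset Λ, (Z.card : ℝ) * opNorm (h Z) ≤ n * (g₀ + g₁) := by
      calc ∑ Z : Finset Λ, (Z.card : ℝ) * opNorm (h Z)
          = ∑ Z : Finset Λ, ∑ i' : Λ, (if i' ∈ Z then opNorm (h Z) else 0) := by
            refine Finset.sum_congr rfl fun Z _ => ?_
            rw [Finset.sum_ite_mem, Finset.univ_inter, Finset.sum_const, nsmul_eq_mul]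
        _ = ∑ i' : Λ, ∑ Z : Finset Λ, (if i' ∈ Z then opNorm (h Z) else 0) := Finset.sum_comm
        _ = ∑ i' : Λ, ∑ Z ∈ Finset.univ.filter (fun Z : Finset Λ => i' ∈ Z), opNorm (h Z) := by
            refine Finset.sum_congr rfl fun i' _ => ?_
            rw [Finset.sum_filter]
        _ ≤ ∑ _i' : Λ, (g₀ + g₁) := Finset.sum_le_sum fun i' _ => hext i'
        _ = n * (g₀ + g₁) := by
            rw [Finset.sum_const, nsmul_eq_mul, hn, Finset.card_univ]
    set C : Op Λ d := A * A * D - A * D * A - A * D * A + D * A * A with hC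
    have hCsum : C = ∑ Z : Finset Λ, K Z := by
      have hCD : C = A * A * H - A * H * A - A * H * A + H * A * A := by
        rw [hC, hD]
        simp only [Matrix.mul_sub, Matrix.sub_mul, Matrix.mul_smul, Matrix.smul_mul,
          mul_one, one_mul]
        abel
      rw [hCD, hHdef, hK]
      simp only [Finset.mul_sum, Finset.sum_mul]
      rw [← Finset.sum_sub_distrib, ← Finset.sum_sub_distrib, ← Finset.sum_add_distrib]
    have hCnorm : opNorm C ≤ 4 * (k:ℝ) * (n * (g₀ + g₁)) := by
      calc opNorm C ≤ ∑ Z : Finset Λ, opNorm (K Z) := by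
            rw [hCsum]; exact opNorm_sum_le _ _
        _ ≤ ∑ Z : Finset Λ, 4 * (k:ℝ) * (Z.card : ℝ) * opNorm (h Z) :=
            Finset.sum_le_sum fun Z _ => hKbound Z
        _ = 4 * (k:ℝ) * ∑ Z : Finset Λ, (Z.card : ℝ) * opNorm (h Z) := by
            rw [Finset.mul_sum]
            exact Finset.sum_congr rfl fun Z _ => by ring
        _ ≤ 4 * (k:ℝ) * (n * (g₀ + g₁)) := by
            have hk0 : (0:ℝ) ≤ 4 * (k:ℝ) := by positivity
            exact mul_le_mul_of_nonneg_left hcount hk0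
    -- expectation identity
    have hmv : ∀ (M N : Op Λ d) (v : Config Λ d → ℂ),
        (M * N).mulVec v = M.mulVec (N.mulVec v) := fun M N v =>
      (Matrix.mulVec_mulVec v M N).symm
    have hEAAD : Ex (A * A * D) = 0 := by
      rw [hEx, expectVec_apply, hmv, hmv, hDΩ]
      simp
    have hEDAA : Ex (D * A * A) = 0 := by
      rw [hEx, expectVec_apply, hmv, hmv, hadj, hDherm, hDΩ]
      simp
    have hδD : D.mulVec (δv s) = (D * A).mulVec Ω := by
      rw [hδv]
      simp only [Matrix.mulVec_sub, Matrix.mulVec_smul]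
      rw [hDΩ, smul_zero, sub_zero, hmv]
    have hipδD : star (δv s) ⬝ᵥ D.mulVec (δv s) = Ex (A * D * A) := by
      have e0 : star (δv s) = star (A.mulVec Ω) - star (cc s • Ω) := by
        rw [show δv s = A.mulVec Ω - cc s • Ω from rfl, star_sub]
      rw [hδD, e0, sub_dotProduct]
      have e1 : star (cc s • Ω) ⬝ᵥ (D * A).mulVec Ω = 0 := by
        rw [star_smul, smul_dotProduct, hmv, hadj, hDherm, hDΩ]
        simp
      have e2 : star (A.mulVec Ω) ⬝ᵥ (D * A).mulVec Ω = Ex (A * D * A) := by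
        have := hadj Aᴴ (Ω) ((D * A).mulVec Ω)
        rw [Matrix.conjTranspose_conjTranspose] at this
        rw [← this, hA.eq, hEx, expectVec_apply, hmv, hmv, hmv]
      rw [e1, e2, sub_zero]
    have hsum0 : Ex (A * A * D) - 2 • Ex (A * D * A) + Ex (D * A * A)
        = Ex C := by
      rw [hC, map_add, map_sub, map_sub]
      push_cast
      ring
    have hEADA : Ex (A * D * A) = -(Ex C) / 2 := by
      rw [← hsum0, hEAAD, hEDAA]
      push_cast
      ring
    have hECbound : ‖Ex C‖ ≤ opNorm C := by
      rw [hEx, expectVec_apply]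
      have := abs_expect_le C Ω Ω
      rwa [hΩE, one_mul, mul_one] at this
    -- gap inequality
    by_cases hδ0 : δv s = 0
    · rw [hδ0]
      have : toE (0 : Config Λ d → ℂ) = 0 := rfl
      rw [this, norm_zero]
      have : (0:ℝ) ≤ 2 * (k : ℝ) * (n * (g₀ + g₁)) := by positivity
      nlinarith
    · set r : ℝ := ‖toE (δv s)‖ with hr
      have hr0 : 0 < r := by
        rw [hr]
        refine norm_pos_iff.2 fun hc => hδ0 ?_
        have : (WithLp.equiv 2 (Config Λ d → ℂ)) (toE (δv s)) = δv s := rfl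
        rw [← this, hc]
        rfl
      have hrsq : r ^ 2 = ∑ x, ‖δv s x‖ ^ 2 := by
        rw [hr, norm_toE, Real.sq_sqrt (Finset.sum_nonneg fun x _ => sq_nonneg _)]
      set ψ : Config Λ d → ℂ := ((r : ℂ))⁻¹ • δv s with hψ
      have hψnorm : ∑ x, ‖ψ x‖ ^ 2 = 1 := by
        rw [hψ]
        have : ∀ x, ‖(((r:ℂ))⁻¹ • δv s) x‖ ^ 2 = (r⁻¹) ^ 2 * ‖δv s x‖ ^ 2 := by
          intro x
          rw [Pi.smul_apply, norm_smul, mul_pow]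
          congr 2
          rw [norm_inv, Complex.norm_real, Real.norm_eq_abs, abs_of_pos hr0]
        rw [Finset.sum_congr rfl fun x _ => this x, ← Finset.mul_sum, ← hrsq]
        field_simp
      have hψorth : star Ω ⬝ᵥ ψ = 0 := by
        rw [hψ, dotProduct_smul, hδorth s, smul_zero]
      have hgap' := hgap ψ hψnorm hψorth
      have hψip : star ψ ⬝ᵥ H.mulVec ψ = ((r:ℂ))⁻¹ * ((r:ℂ))⁻¹ * (star (δv s) ⬝ᵥ H.mulVec (δv s)) := by
        rw [hψ, star_smul, smul_dotProduct, Matrix.mulVec_smul, dotProduct_smul]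
        rw [smul_eq_mul, smul_eq_mul]
        rw [star_inv₀, Complex.star_def, Complex.conj_ofReal]
        ring
      -- r^2 as complex inner product
      have hipδ : star (δv s) ⬝ᵥ δv s = ((r^2 : ℝ) : ℂ) := by
        rw [ip_self, hrsq]
      have hHδ : (star (δv s) ⬝ᵥ H.mulVec (δv s)).re
          = (star (δv s) ⬝ᵥ D.mulVec (δv s)).re + E₀ * r ^ 2 := by
        have hHD : H = D + (E₀ : ℂ) • 1 := by rw [hD]; abel
        have hsum : star (δv s) ⬝ᵥ H.mulVec (δv s)
            = star (δv s) ⬝ᵥ D.mulVec (δv s) + (E₀ : ℂ) * ((r ^ 2 : ℝ) : ℂ) := by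
          rw [hHD, Matrix.add_mulVec, dotProduct_add, Matrix.smul_mulVec,
            Matrix.one_mulVec, dotProduct_smul, hipδ, smul_eq_mul]
        rw [hsum, Complex.add_re]
        congr 1
        rw [show ((E₀ : ℂ) * ((r ^ 2 : ℝ) : ℂ)) = (((E₀ * r ^ 2 : ℝ)) : ℂ) by push_cast; ring,
          Complex.ofReal_re]
      have hgapre : E₀ + Δ ≤ (r⁻¹)^2 * (star (δv s) ⬝ᵥ H.mulVec (δv s)).re := by
        have := hgap'
        rw [hψip] at this
        have e : (((r:ℂ))⁻¹ * ((r:ℂ))⁻¹ * (star (δv s) ⬝ᵥ H.mulVec (δv s))).re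
            = (r⁻¹)^2 * (star (δv s) ⬝ᵥ H.mulVec (δv s)).re := by
          have : ((r:ℂ))⁻¹ * ((r:ℂ))⁻¹ = (((r⁻¹)^2 : ℝ) : ℂ) := by
            push_cast
            ring
          rw [this, Complex.re_ofReal_mul]
        rwa [e] at this
      have hDδre : Δ * r ^ 2 ≤ (star (δv s) ⬝ᵥ D.mulVec (δv s)).re := by
        have h1 : (E₀ + Δ) * r ^ 2 ≤ (star (δv s) ⬝ᵥ H.mulVec (δv s)).re := by
          have hmul := mul_le_mul_of_nonneg_right hgapre (sq_nonneg r)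
          have heq : (r⁻¹)^2 * (star (δv s) ⬝ᵥ H.mulVec (δv s)).re * r ^ 2
              = (star (δv s) ⬝ᵥ H.mulVec (δv s)).re := by
            field_simp
          linarith
        rw [hHδ] at h1
        nlinarith
      -- combine
      have hfinal : (star (δv s) ⬝ᵥ D.mulVec (δv s)).re ≤ 2 * (k:ℝ) * (n * (g₀ + g₁)) := by
        rw [hipδD, hEADA]
        calc (-(Ex C) / 2).re ≤ ‖(-(Ex C) / 2)‖ := Complex.re_le_norm _
          _ = ‖Ex C‖ / 2 := by rw [norm_div, norm_neg]; simp
          _ ≤ (4 * (k:ℝ) * (n * (g₀ + g₁))) / 2 := by linarith [hECbound, hCnorm]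
          _ = 2 * (k:ℝ) * (n * (g₀ + g₁)) := by ring
      calc Δ * ‖toE (δv s)‖^2 = Δ * r ^ 2 := by rw [hr]
        _ ≤ (star (δv s) ⬝ᵥ D.mulVec (δv s)).re := hDδre
        _ ≤ 2 * (k:ℝ) * (n * (g₀ + g₁)) := hfinal
  -- uniform bound on the fluctuation norms
  set Rb : ℝ := Real.sqrt (2 * (k:ℝ) * (n * (g₀ + g₁)) / Δ) with hRb
  have hrbound : ∀ s, ‖toE (δv s)‖ ≤ Rb := by
    intro s
    have h1 : ‖toE (δv s)‖^2 ≤ 2 * (k:ℝ) * (n * (g₀ + g₁)) / Δ := by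
      have := hvar s
      rw [le_div_iff₀ hΔ]
      nlinarith
    rw [hRb]
    have := Real.sqrt_le_sqrt h1
    rwa [Real.sqrt_sq (norm_nonneg _)] at this
  -- per-s expectation bound
  have hBnorm : ∀ s, opNorm (uᴴ * Hi s * u - Hi s) ≤ 2 := by
    intro s
    have h1 := opNorm_mul_le (uᴴ * Hi s) u
    have h2 := opNorm_mul_le uᴴ (Hi s)
    have h3 := (hHi s).2.2
    have h4 := opNorm_sub_le (uᴴ * Hi s * u) (Hi s)
    have h5 := opNorm_nonneg (uᴴ * Hi s)
    have h6 := opNorm_nonneg uᴴ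
    have h7 := opNorm_nonneg (Hi s)
    have h8 := opNorm_nonneg u
    nlinarith
  have hEB : ∀ s, ‖Ex ((uᴴ * Hi s * u - Hi s) * HL s)‖ ≤ 2 * Rb := by
    intro s
    have hsplit : (HL s).mulVec Ω = δv s + cc s • Ω := by
      rw [show δv s = (HL s).mulVec Ω - cc s • Ω from rfl]
      abel
    have e1 : Ex ((uᴴ * Hi s * u - Hi s) * HL s)
        = star Ω ⬝ᵥ ((uᴴ * Hi s * u - Hi s).mulVec (δv s)) := by
      rw [hEx, expectVec_apply, ← Matrix.mulVec_mulVec, hsplit, Matrix.mulVec_add,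
        Matrix.mulVec_smul, dotProduct_add, dotProduct_smul]
      have : star Ω ⬝ᵥ (uᴴ * Hi s * u - Hi s).mulVec Ω = 0 := hBzero s
      rw [this, smul_zero, add_zero]
    rw [e1]
    calc ‖star Ω ⬝ᵥ ((uᴴ * Hi s * u - Hi s).mulVec (δv s))‖
        ≤ ‖toE Ω‖ * (opNorm (uᴴ * Hi s * u - Hi s) * ‖toE (δv s)‖) := abs_expect_le _ _ _
      _ ≤ 1 * (2 * Rb) := by
          rw [hΩE]
          refine mul_le_mul_of_nonneg_left ?_ zero_le_one
          have := hrbound s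
          have h2 := hBnorm s
          have h3 := norm_nonneg (toE (δv s))
          have h4 := opNorm_nonneg (uᴴ * Hi s * u - Hi s)
          nlinarith
      _ = 2 * Rb := one_mul _
  -- assembling the expectation of the difference
  have hEtotal : star Ω ⬝ᵥ ((uᴴ * H * u - H).mulVec Ω)
      = ((n : ℂ))⁻¹ • ∑ s, (J s : ℂ) • Ex ((uᴴ * Hi s * u - Hi s) * HL s) := by
    have e0 : star Ω ⬝ᵥ ((uᴴ * H * u - H).mulVec Ω) = Ex (uᴴ * H * u - H) := rfl
    rw [e0, hstepA, hBdec, map_add, hVzero, zero_add, _root_.map_smul, map_sum]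
    congr 1
    exact Finset.sum_congr rfl fun s _ => by rw [_root_.map_smul]
  -- final numeric estimate
  have hRb0 : 0 ≤ Rb := Real.sqrt_nonneg _
  have hnormsum : ‖∑ s, (J s : ℂ) • Ex ((uᴴ * Hi s * u - Hi s) * HL s)‖
      ≤ g₁ * (2 * Rb) := by
    calc ‖∑ s, (J s : ℂ) • Ex ((uᴴ * Hi s * u - Hi s) * HL s)‖
        ≤ ∑ s, ‖(J s : ℂ) • Ex ((uᴴ * Hi s * u - Hi s) * HL s)‖ := norm_sum_le _ _
      _ ≤ ∑ s, |J s| * (2 * Rb) := by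
          refine Finset.sum_le_sum fun s _ => ?_
          rw [norm_smul, Complex.norm_real, Real.norm_eq_abs]
          exact mul_le_mul_of_nonneg_left (hEB s) (abs_nonneg _)
      _ = (∑ s, |J s|) * (2 * Rb) := by rw [Finset.sum_mul]
      _ ≤ g₁ * (2 * Rb) := by
          refine mul_le_mul_of_nonneg_right hJ (by positivity)
  have hmain : ‖star Ω ⬝ᵥ ((uᴴ * H * u - H).mulVec Ω)‖ ≤ (n:ℝ)⁻¹ * (g₁ * (2 * Rb)) := by
    rw [hEtotal, norm_smul]
    have : ‖((n : ℂ))⁻¹‖ = (n:ℝ)⁻¹ := by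
      rw [norm_inv, Complex.norm_natCast]
    rw [this]
    exact mul_le_mul_of_nonneg_left hnormsum (by positivity)
  refine le_trans hmain ?_
  -- compare with δRob
  have hγ0 : 0 ≤ γ := by rw [hγ]; exact Real.sqrt_nonneg _
  have hq0 : 0 ≤ (g₀ + g₁) / (n * Δ) := by positivity
  have hRble : Rb ≤ (n:ℝ) * (γ * Real.sqrt ((g₀ + g₁) / (n * Δ))) := by
    rw [hRb]
    have hrhs0 : 0 ≤ (n:ℝ) * (γ * Real.sqrt ((g₀ + g₁) / (n * Δ))) := by positivity
    rw [show (n:ℝ) * (γ * Real.sqrt ((g₀ + g₁) / (n * Δ)))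
        = Real.sqrt (((n:ℝ) * γ)^2 * ((g₀ + g₁) / (n * Δ))) by
      rw [Real.sqrt_mul (sq_nonneg _), Real.sqrt_sq (by positivity)]
      ring]
    refine Real.sqrt_le_sqrt ?_
    have hγsq : γ^2 = 18 * (k:ℝ) * ((k:ℝ) + 1) := by
      rw [hγ, Real.sq_sqrt (by positivity)]
    have hkk : 2 * (k:ℝ) ≤ 18 * (k:ℝ) * ((k:ℝ) + 1) := by
      have hk1 : (1:ℝ) ≤ (k:ℝ) := by exact_mod_cast hk
      nlinarith
    have e : ((n:ℝ) * γ)^2 * ((g₀ + g₁) / (n * Δ)) = γ^2 * ((n:ℝ) * (g₀ + g₁) / Δ) := by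
      field_simp
    rw [e, hγsq]
    have h9 : 0 ≤ (n:ℝ) * (g₀ + g₁) / Δ := by positivity
    calc 2 * (k:ℝ) * ((n:ℝ) * (g₀ + g₁)) / Δ
        = (2 * (k:ℝ)) * ((n:ℝ) * (g₀ + g₁) / Δ) := by ring
      _ ≤ (18 * (k:ℝ) * ((k:ℝ) + 1)) * ((n:ℝ) * (g₀ + g₁) / Δ) :=
          mul_le_mul_of_nonneg_right hkk h9
  have : (n:ℝ)⁻¹ * (g₁ * (2 * Rb)) ≤ 2 * γ * g₁ * Real.sqrt ((g₀ + g₁) / (n * Δ)) := by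
    have h1 : (n:ℝ)⁻¹ * (g₁ * (2 * Rb))
        ≤ (n:ℝ)⁻¹ * (g₁ * (2 * ((n:ℝ) * (γ * Real.sqrt ((g₀ + g₁) / (n * Δ)))))) := by
      refine mul_le_mul_of_nonneg_left ?_ (by positivity)
      refine mul_le_mul_of_nonneg_left ?_ hg₁
      linarith [hRble]
    refine le_trans h1 (le_of_eq ?_)
    field_simp
  rw [hδ]
  exact this


end FullyConnected
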